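/- arXiv:math/0603343 — 3 statements merged into one kernel-verified Lean document; each statement's English description precedes it below -/
import Mathlib

section
/- In the Frohman–Gelca algebra A_t (t nonzero, not a root of unity), if x, y, z, w are integers with x + z even, y + w even, and xw - yz ≠ 0, then e_{(x,y)} - e_{(z,w)} is a commutator: there exist a, b ∈ A_t and λ ∈ ℂ with e_{(x,y)} - e_{(z,w)} = λ(a*b - b*a). -/
noncomputable section

def negRel : Setoid (ℤ × ℤ) where
  r v w := v = w ∨ v = -w
  iseqv := by
    refine ⟨fun v => Or.inl rfl, ?_, ?_⟩
    · rintro v w (rfl | rfl) <;> simp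
    · rintro u v w (rfl | rfl) (h | h) <;> simp_all

/-- The index set `ℤ² / ±1`. -/
abbrev Q2 := Quotient negRel

/-- The underlying vector space of the Frohman–Gelca algebra: the free `ℂ`-module on `ℤ²/±1`. -/
abbrev FG := Q2 →₀ ℂ

/-- The basis vector `e_{(p,q)}`. -/
def e (v : ℤ × ℤ) : FG := Finsupp.single (Quotient.mk negRel v) 1

lemma e_neg (v : ℤ × ℤ) : e (-v) = e v := by
  unfold e
  congr 1
  exact Quotient.sound (Or.inr rfl)

/-- The determinant `p s - q r`. -/
def det (v w : ℤ × ℤ) : ℤ := v.1 * w.2 - v.2 * w.1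

/-- Product-to-sum formula on representatives. -/
def mulB (t : ℂ) (v w : ℤ × ℤ) : FG :=
  t ^ (det v w) • e (v + w) + t ^ (-(det v w)) • e (v - w)

lemma mulB_negL (t : ℂ) (v w : ℤ × ℤ) : mulB t (-v) w = mulB t v w := by
  unfold mulB
  have hd : det (-v) w = -(det v w) := by simp [det]; ring
  rw [hd, neg_neg, show -v + w = -(v - w) by abel, show -v - w = -(v + w) by abel,
    e_neg, e_neg, add_comm]

lemma mulB_negR (t : ℂ) (v w : ℤ × ℤ) : mulB t v (-w) = mulB t v w := by
  unfold mulB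
  have hd : det v (-w) = -(det v w) := by simp [det]; ring
  rw [hd, neg_neg, show v + -w = v - w by abel, show v - -w = v + w by abel, add_comm]

/-- Product-to-sum formula on the quotient `ℤ²/±1`. -/
def qmulB (t : ℂ) : Q2 → Q2 → FG :=
  Quotient.lift₂ (mulB t) (by
    rintro a b a' b' (rfl | rfl) (rfl | rfl)
    · rfl
    · rw [mulB_negR]
    · rw [mulB_negL]
    · rw [mulB_negL, mulB_negR])

/-- Multiplication in the Frohman–Gelca algebra, extended bilinearly. -/
def fgMul (t : ℂ) (a b : FG) : FG :=
  a.sum fun x c => b.sum fun y d => (c * d) • qmulB t x y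

/-- The span of commutators `C(A_t)`. -/
def commSpan (t : ℂ) : Submodule ℂ FG :=
  Submodule.span ℂ {x | ∃ a b : FG, x = fgMul t a b - fgMul t b a}

lemma fgMul_e (t : ℂ) (u v : ℤ × ℤ) : fgMul t (e u) (e v) = mulB t u v := by
  unfold fgMul e
  rw [Finsupp.sum_single_index, Finsupp.sum_single_index]
  · show (1 * 1 : ℂ) • mulB t u v = mulB t u v
    simp
  · show ((1 : ℂ) * 0) • qmulB t _ _ = 0
    simp
  · simp

lemma tzpow_ne (t : ℂ) (ht : t ≠ 0) (hroot : ∀ n : ℕ, 0 < n → t ^ n ≠ 1)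
    (d : ℤ) (hd : d ≠ 0) : t ^ d ≠ t ^ (-d) := by
  intro h
  have h2 : t ^ (2 * d) = 1 := by
    calc t ^ (2 * d) = t ^ d * t ^ d := by rw [two_mul, zpow_add₀ ht]
    _ = t ^ d * t ^ (-d) := by nth_rewrite 2 [h]; rfl
    _ = 1 := by rw [← zpow_add₀ ht]; simp
  rcases lt_trichotomy d 0 with hlt | rfl | hgt
  · have : t ^ (2 * d).natAbs = 1 := by
      have h3 : t ^ (-(2 * d)) = 1 := by rw [zpow_neg, h2]; simp
      rw [← zpow_natCast, ← Int.natAbs_neg, Int.natAbs_of_nonneg (by omega : 0 ≤ -(2 * d))]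
      exact h3
    exact hroot _ (by omega) this
  · exact hd rfl
  · have : t ^ (2 * d).natAbs = 1 := by
      rw [← zpow_natCast, Int.natAbs_of_nonneg (by omega : 0 ≤ 2 * d)]
      exact h2
    exact hroot _ (by omega) this


theorem stmt4 (t : ℂ) (ht : t ≠ 0) (hroot : ∀ n : ℕ, 0 < n → t ^ n ≠ 1)
    (x y z w : ℤ) (hx : Even (x + z)) (hy : Even (y + w))
    (hdet : x * w - y * z ≠ 0) :
    ∃ (a b : FG) (lam : ℂ),
      e (x, y) - e (z, w) = lam • (fgMul t a b - fgMul t b a) := by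
  obtain ⟨k, hk⟩ := hx
  obtain ⟨m, hm⟩ := hy
  set u : ℤ × ℤ := (k, m)
  set v : ℤ × ℤ := (k - z, m - w)
  set d : ℤ := det u v with hdd
  have hdval : 2 * d = y * z - x * w := by
    simp only [hdd, det, u, v]
    linear_combination w * hk - z * hm
  have hd0 : d ≠ 0 := by omega
  have hne : t ^ d - t ^ (-d) ≠ 0 :=
    sub_ne_zero.mpr (tzpow_ne t ht hroot d hd0)
  refine ⟨e u, e v, (t ^ d - t ^ (-d))⁻¹, ?_⟩
  rw [fgMul_e, fgMul_e]
  have h1 : mulB t u v = t ^ d • e (x, y) + t ^ (-d) • e (z, w) := by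
    unfold mulB
    have huv : u + v = (x, y) := by simp only [u, v, Prod.mk_add_mk, Prod.mk.injEq]; omega
    have huv2 : u - v = (z, w) := by simp only [u, v, Prod.mk_sub_mk, Prod.mk.injEq]; omega
    rw [huv, huv2, hdd]
  have h2 : mulB t v u = t ^ (-d) • e (x, y) + t ^ d • e (z, w) := by
    unfold mulB
    have hdvu : det v u = -d := by simp only [hdd, det]; ring
    have hvu : v + u = (x, y) := by simp only [u, v, Prod.mk_add_mk, Prod.mk.injEq]; omega
    have hvu2 : v - u = -(z, w) := by
      simp only [u, v, Prod.neg_mk, Prod.mk_sub_mk, Prod.mk.injEq]; omega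
    rw [hvu, hvu2, e_neg, hdvu, neg_neg]
  rw [h1, h2]
  have : t ^ d • e (x, y) + t ^ (-d) • e (z, w) -
      (t ^ (-d) • e (x, y) + t ^ d • e (z, w)) =
      (t ^ d - t ^ (-d)) • (e (x, y) - e (z, w)) := by
    rw [sub_smul, smul_sub, smul_sub]
    abel
  rw [this, smul_smul, inv_mul_cancel₀ hne, one_smul]




end
end

section
/- Define φ : A_t → ℂ⁵ (with coordinates indexed by {φ-class, ee, eo, oe, oo}) sending e_{(0,0)} to the generator of the φ-coordinate and e_{(p,q)} for (p,q) ≠ (0,0) to the generator of the coordinate determined by the parities (p mod 2, q mod 2), extended linearly. Then φ vanishes on every commutator: φ(a*b - b*a) = 0 for all a, b ∈ A_t. -/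
noncomputable section

/-- The class of a pair: `0` for `(0,0)`, then `ee`, `eo`, `oe`, `oo`. -/
def cls (v : ℤ × ℤ) : Fin 5 :=
  if v = 0 then 0
  else if Even v.1 then (if Even v.2 then 1 else 2)
  else if Even v.2 then 3 else 4

def qcls : Q2 → Fin 5 :=
  Quotient.lift cls (by
    rintro a b (rfl | rfl)
    · rfl
    · simp [cls, neg_eq_zero, Prod.fst_neg, Prod.snd_neg])

/-- The parity map `φ : A_t → ℂ⁵`. -/
def phiL : FG →ₗ[ℂ] (Fin 5 → ℂ) :=
  Finsupp.lsum ℂ fun x => LinearMap.toSpanSingleton ℂ (Fin 5 → ℂ) (Pi.single (qcls x) 1)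

/-! `e_v e_w` and `e_w e_v` are both combinations of `e_{v+w}` and `e_{v-w}`, with the weights
`t^{±d}`, `d = det v w`, exchanged. If `d = 0` the two products coincide. Otherwise `v ± w` are both
nonzero and have the same parities, so `φ` sends both products to `(t^d + t^{-d})` times the
same generator. Bilinearity then gives `φ(ab) = φ(ba)` for all `a, b`. -/

lemma phiL_e (v : ℤ × ℤ) : phiL (e v) = Pi.single (cls v) 1 := by
  simp [phiL, e, qcls]

lemma det_swap (v w : ℤ × ℤ) : det w v = -det v w := by
  simp only [det]; ring

lemma cls_add_eq_cls_sub {v w : ℤ × ℤ} (hadd : v + w ≠ 0) (hsub : v - w ≠ 0) :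
    cls (v + w) = cls (v - w) := by
  simp [cls, hadd, hsub, Int.even_add, Int.even_sub]

lemma cls_add_eq_cls_sub_of_det_ne_zero {v w : ℤ × ℤ} (hd : det v w ≠ 0) :
    cls (v + w) = cls (v - w) := by
  refine cls_add_eq_cls_sub (fun h => hd ?_) (fun h => hd ?_)
  · rw [eq_neg_of_add_eq_zero_left h, det, Prod.fst_neg, Prod.snd_neg]; ring
  · rw [sub_eq_zero.mp h, det]; ring

lemma phiL_mulB_comm (t : ℂ) (v w : ℤ × ℤ) : phiL (mulB t v w) = phiL (mulB t w v) := by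
  rw [mulB, mulB, det_swap v w, neg_neg, add_comm w v, show w - v = -(v - w) by abel, e_neg]
  by_cases hd : det v w = 0
  · simp [hd]
  · simp only [map_add, map_smul, phiL_e, cls_add_eq_cls_sub_of_det_ne_zero hd]
    abel

lemma phiL_qmulB_comm (t : ℂ) (x y : Q2) : phiL (qmulB t x y) = phiL (qmulB t y x) :=
  Quotient.inductionOn₂ x y (phiL_mulB_comm t)

lemma phiL_fgMul_comm (t : ℂ) (a b : FG) : phiL (fgMul t a b) = phiL (fgMul t b a) := by
  simp only [fgMul, map_finsuppSum, map_smul]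
  rw [Finsupp.sum_comm]
  exact Finsupp.sum_congr fun y _ => Finsupp.sum_congr fun x _ => by
    rw [mul_comm, phiL_qmulB_comm t x y]

theorem stmt6_general (t : ℂ) (a b : FG) : phiL (fgMul t a b - fgMul t b a) = 0 := by
  rw [map_sub, sub_eq_zero, phiL_fgMul_comm]

theorem stmt6 (t : ℂ) (ht : t ≠ 0) (hroot : ∀ n : ℕ, 0 < n → t ^ n ≠ 1)
    (a b : FG) : phiL (fgMul t a b - fgMul t b a) = 0 :=
  stmt6_general t a b

end
end

section
/- Multiplication in the Frohman–Gelca algebra A_t is associative: for all basis elements, (e_{(a,b)} * e_{(c,d)}) * e_{(e,f)} = e_{(a,b)} * (e_{(c,d)} * e_{(e,f)}). -/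
noncomputable section

lemma fgMul_e_e (t : ℂ) (v w : ℤ × ℤ) : fgMul t (e v) (e w) = mulB t v w := by
  unfold fgMul e
  rw [Finsupp.sum_single_index, Finsupp.sum_single_index] <;> simp [qmulB]

lemma fgMul_add_left (t : ℂ) (a₁ a₂ b : FG) :
    fgMul t (a₁ + a₂) b = fgMul t a₁ b + fgMul t a₂ b := by
  unfold fgMul
  rw [Finsupp.sum_add_index'] <;> simp [add_mul, add_smul, Finsupp.sum_add]

lemma fgMul_smul_left (t : ℂ) (c : ℂ) (a b : FG) :
    fgMul t (c • a) b = c • fgMul t a b := by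
  unfold fgMul
  rw [Finsupp.sum_smul_index', Finsupp.smul_sum] <;>
    simp [mul_assoc, mul_smul, Finsupp.smul_sum]

lemma fgMul_add_right (t : ℂ) (a b₁ b₂ : FG) :
    fgMul t a (b₁ + b₂) = fgMul t a b₁ + fgMul t a b₂ := by
  unfold fgMul
  rw [← Finsupp.sum_add]
  congr 1; ext x c
  rw [Finsupp.sum_add_index'] <;> simp [mul_add, add_smul]

lemma fgMul_smul_right (t : ℂ) (c : ℂ) (a b : FG) :
    fgMul t a (c • b) = c • fgMul t a b := by
  unfold fgMul
  rw [Finsupp.smul_sum]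
  congr 1; ext x c'
  rw [Finsupp.sum_smul_index', Finsupp.smul_sum] <;>
    simp [mul_smul, mul_left_comm]

theorem stmt16 (t : ℂ) (ht : t ≠ 0) (a b c d f g : ℤ) :
    fgMul t (fgMul t (e (a, b)) (e (c, d))) (e (f, g)) =
      fgMul t (e (a, b)) (fgMul t (e (c, d)) (e (f, g))) := by
  rw [fgMul_e_e, fgMul_e_e]
  simp only [mulB, fgMul_add_left, fgMul_add_right, fgMul_smul_left, fgMul_smul_right,
    fgMul_e_e, smul_add, smul_smul, ← zpow_add₀ ht, det, Prod.mk_add_mk, Prod.mk_sub_mk]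
  ring_nf
  abel

end
end
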